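/- arXiv:2207.11870 — 2 statements merged into one kernel-verified Lean document; each statement's English description precedes it below -/
import Mathlib

section
/- For horizontal almost ι_K-complexes A, B, C, the two involutions ι_{A⊗(B⊗C)} and ι_{(A⊗B)⊗C} on the U=0 truncation of A ⊗_{F₂[U]} B ⊗_{F₂[U]} C, obtained by iterating the tensor-product construction in the two possible ways, are chain homotopic; hence the tensor operation on almost ι_K-local equivalence classes is associative. -/
/-!
Algebraic model for horizontal almost `ι_K`-complexes (Kang–Park,
"Torsion in the knot concordance group and cabling").

Conventions.  We work over `F₂ = ℤ/2`.  A bigraded chain complex of finitely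
generated free `F₂[U]`-modules is presented by a finite homogeneous basis
`idx`, a bidegree function `gr : idx → ℤ × ℤ` (Alexander and Maslov gradings),
and a differential matrix `d` over `F₂[U]` (the `j`-th basis vector is sent to
`∑ i, d i j • eᵢ`; matrix multiplication is composition).  The variable `U`
has bidegree `(−1, −2)` and the differential has bidegree `(0, −1)`.
-/

open Polynomial Matrix Kronecker

noncomputable section

/-- The field with two elements. -/
abbrev F2 : Type := ZMod 2

/-- The ring `F₂[U]`. -/
abbrev PolyU : Type := Polynomial F2

/-- The ring `F₂[U, U⁻¹]`. -/
abbrev Laur : Type := LaurentPolynomial F2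

/-- The localization map `F₂[U] → F₂[U, U⁻¹]`. -/
def toL : PolyU →+* Laur := Polynomial.toLaurent

/-- The skew of a bidegree: `(A, M) ↦ (−A, M)`. -/
def skew (p : ℤ × ℤ) : ℤ × ℤ := (-p.1, p.2)

/-- Data of a bigraded complex of finitely generated free `F₂[U]`-modules. -/
structure CxData where
  idx : Type
  [fintype_idx : Fintype idx]
  [dec_idx : DecidableEq idx]
  gr : idx → ℤ × ℤ
  d : Matrix idx idx PolyU

attribute [instance] CxData.fintype_idx CxData.dec_idx

/-- The `U = 0` (hat-flavored) truncation of a matrix over `F₂[U]`. -/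
def hatM {m n : Type} (f : Matrix m n PolyU) : Matrix m n F2 :=
  fun i j => (f i j).coeff 0

/-- `f` is a homogeneous `F₂[U]`-linear map of bidegree `δ` from `C` to `D`:
a monomial `U^k` appearing in the entry `(i, j)` forces
`gr i + k • (−1, −2) = gr j + δ`. -/
def GradedMap (C D : CxData) (δ : ℤ × ℤ) (f : Matrix D.idx C.idx PolyU) : Prop :=
  ∀ (i : D.idx) (j : C.idx) (k : ℕ), (f i j).coeff k ≠ 0 →
    D.gr i + (-(k : ℤ), -2 * (k : ℤ)) = C.gr j + δ

/-- An element (column vector) of `C` is homogeneous of bidegree `δ`. -/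
def Homog (C : CxData) (δ : ℤ × ℤ) (v : Matrix C.idx Unit PolyU) : Prop :=
  ∀ (i : C.idx) (k : ℕ), (v i ()).coeff k ≠ 0 →
    C.gr i + (-(k : ℤ), -2 * (k : ℤ)) = δ

namespace CxData

/-- `C` is a bigraded chain complex: `∂² = 0` and `∂` has bidegree `(0, −1)`. -/
def IsComplex (C : CxData) : Prop :=
  C.d * C.d = 0 ∧ GradedMap C C (0, -1) C.d

/-- The formal derivative `Φ` of the differential with respect to `U`. -/
def Phi (C : CxData) : Matrix C.idx C.idx PolyU :=
  fun i j => derivative (C.d i j)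

/-- The induced differential on the truncation `Ĉ = C/UC`. -/
def dHat (C : CxData) : Matrix C.idx C.idx F2 := hatM C.d

/-- The truncation of `Φ` to `Ĉ`. -/
def PhiHat (C : CxData) : Matrix C.idx C.idx F2 := hatM C.Phi

/-- The localized differential, over `F₂[U, U⁻¹]`. -/
def dL (C : CxData) : Matrix C.idx C.idx Laur := C.d.map toL

end CxData

/-- Chain homotopy (everything is mod 2) between maps `Ĉ → D̂` of truncations. -/
def HatHomotopic (C D : CxData) (f g : Matrix D.idx C.idx F2) : Prop :=
  ∃ H : Matrix D.idx C.idx F2, f + g = D.dHat * H + H * C.dHat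

/-- Chain homotopy between maps `C → D` over `F₂[U]`. -/
def Homotopic (C D : CxData) (f g : Matrix D.idx C.idx PolyU) : Prop :=
  ∃ H : Matrix D.idx C.idx PolyU, f + g = D.d * H + H * C.d

/-- Chain homotopy between maps `U⁻¹C → U⁻¹D` over `F₂[U, U⁻¹]`. -/
def LHomotopic (C D : CxData) (f g : Matrix D.idx C.idx Laur) : Prop :=
  ∃ H : Matrix D.idx C.idx Laur, f + g = D.dL * H + H * C.dL

/-- A matrix on the truncation `Ĉ` is skew-graded: each nonzero entry takes
bidegree `(A, M)` to `(−A, M)`. -/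
def SkewGraded (C : CxData) (f : Matrix C.idx C.idx F2) : Prop :=
  ∀ i j, f i j ≠ 0 → C.gr i = skew (C.gr j)

/-- `f` is a chain homotopy equivalence of the truncation `Ĉ`. -/
def HatHomotopyEquiv (C : CxData) (f : Matrix C.idx C.idx F2) : Prop :=
  f * C.dHat = C.dHat * f ∧
  ∃ g : Matrix C.idx C.idx F2, g * C.dHat = C.dHat * g ∧
    HatHomotopic C C (g * f) 1 ∧ HatHomotopic C C (f * g) 1

/-- The localization `U⁻¹C` is chain homotopy equivalent to `F₂[U, U⁻¹]`
(one generator, zero differential). -/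
def LocalizationTrivial (C : CxData) : Prop :=
  ∃ (f : Matrix Unit C.idx Laur) (g : Matrix C.idx Unit Laur),
    f * C.dL = 0 ∧ C.dL * g = 0 ∧ f * g = 1 ∧
    ∃ H : Matrix C.idx C.idx Laur, 1 + g * f = C.dL * H + H * C.dL

/-- The homology class of the cycle `x` generates the homology of `U⁻¹C`:
the chain map `F₂[U,U⁻¹] → U⁻¹C` sending the generator to `x` is a chain
homotopy equivalence. -/
def GeneratesLocalHomology (C : CxData) (x : Matrix C.idx Unit PolyU) : Prop :=
  C.dL * x.map toL = 0 ∧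
  ∃ p : Matrix Unit C.idx Laur, p * C.dL = 0 ∧ p * x.map toL = 1 ∧
    ∃ H : Matrix C.idx C.idx Laur, 1 + x.map toL * p = C.dL * H + H * C.dL

/-- A pair as in Definition 2.4: a complex together with an involution of the
hat-flavored truncation. -/
structure Hor where
  C : CxData
  iota : Matrix C.idx C.idx F2

/-- `(C, ι)` is a horizontal almost `ι_K`-complex. -/
def IsHorizontal (X : Hor) : Prop :=
  X.C.IsComplex ∧
  LocalizationTrivial X.C ∧
  HatHomotopyEquiv X.C X.iota ∧
  SkewGraded X.C X.iota ∧
  HatHomotopic X.C X.C (X.C.PhiHat * X.iota * X.C.PhiHat * X.iota)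
    (X.iota * X.C.PhiHat * X.iota * X.C.PhiHat) ∧
  HatHomotopic X.C X.C (X.iota * X.iota)
    (1 + X.C.PhiHat * X.iota * X.C.PhiHat * X.iota) ∧
  ∃ f : Matrix X.C.idx X.C.idx PolyU, f * X.C.d = X.C.d * f ∧
    HatHomotopic X.C X.C (hatM f) (X.iota * X.C.PhiHat * X.iota)

/-- The localization `U⁻¹f` of `f` is a chain homotopy equivalence. -/
def LocalizedHomotopyEquiv (C D : CxData) (f : Matrix D.idx C.idx PolyU) : Prop :=
  ∃ g : Matrix C.idx D.idx Laur,
    g * D.dL = C.dL * g ∧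
    LHomotopic C C (g * f.map toL) 1 ∧
    LHomotopic D D (f.map toL * g) 1

/-- An almost `ι_K`-local map from `(C, ι_C)` to `(D, ι_D)`: a bidegree
preserving `F₂[U]`-linear chain map whose localization is a chain homotopy
equivalence and whose truncation homotopy-commutes with the involutions. -/
def AlmostLocalMap (X Y : Hor) (f : Matrix Y.C.idx X.C.idx PolyU) : Prop :=
  GradedMap X.C Y.C (0, 0) f ∧
  f * X.C.d = Y.C.d * f ∧
  LocalizedHomotopyEquiv X.C Y.C f ∧
  HatHomotopic X.C Y.C (Y.iota * hatM f) (hatM f * X.iota)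

/-- `X ≤ Y`: there is an almost `ι_K`-local map from `X` to `Y`. -/
def Le (X Y : Hor) : Prop := ∃ f, AlmostLocalMap X Y f

/-- Almost `ι_K`-local equivalence. -/
def AlmostLocalEquiv (X Y : Hor) : Prop := Le X Y ∧ Le Y X

/-- The tensor product over `F₂[U]` of two complexes. -/
def tensorCx (C D : CxData) : CxData where
  idx := C.idx × D.idx
  gr := fun p => C.gr p.1 + D.gr p.2
  d := C.d ⊗ₖ (1 : Matrix D.idx D.idx PolyU) + (1 : Matrix C.idx C.idx PolyU) ⊗ₖ D.d

/-- The tensor product of pairs, with `ι_{C⊗D} = ι_C ⊗ ι_D + Φι_C ⊗ ι_D Φ`. -/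
def tensorHor (X Y : Hor) : Hor where
  C := tensorCx X.C Y.C
  iota := X.iota ⊗ₖ Y.iota + (X.C.PhiHat * X.iota) ⊗ₖ (Y.iota * Y.C.PhiHat)

/-- The trivial complex `C_O = F₂[U]`, generator in bidegree `(0,0)`, zero
differential, identity involution. -/
def CO : Hor where
  C := { idx := Unit, gr := fun _ => (0, 0), d := 0 }
  iota := 1

/-- The complex `C_E` of the figure-eight knot: generators `a, b, c, d, x`
(indices `0, 1, 2, 3, 4`), with `a, x` in bidegree `(0,0)`, differential
`∂a = Ub`, `∂c = Ud`, `∂b = ∂d = ∂x = 0`, and involution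
`ι(a) = a + x`, `ι(b) = c`, `ι(c) = b`, `ι(d) = d`, `ι(x) = x + d`. -/
def CE : Hor where
  C := { idx := Fin 5
         gr := ![(0, 0), (1, 1), (-1, 1), (0, 2), (0, 0)]
         d := !![0, 0, 0, 0, 0;
                 Polynomial.X, 0, 0, 0, 0;
                 0, 0, 0, 0, 0;
                 0, 0, Polynomial.X, 0, 0;
                 0, 0, 0, 0, 0] }
  iota := !![1, 0, 0, 0, 0;
             0, 0, 1, 0, 0;
             0, 1, 0, 0, 0;
             0, 0, 0, 1, 1;
             1, 0, 0, 0, 1]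

/-- The complex `C_n`: generators `a_n, b_n, c_n, d_n, x_n` (indices
`0, …, 4`), `a_n, x_n` in bidegree `(0,0)`, differential `∂a_n = Uⁿ b_n`,
`∂c_n = Uⁿ d_n`, and involution `ι(a_n) = a_n + x_n`, `ι(b_n) = c_n`,
`ι(c_n) = b_n`, `ι(d_n) = d_n`, `ι(x_n) = x_n`. -/
def Cn (n : ℕ) : Hor where
  C := { idx := Fin 5
         gr := ![(0, 0), ((n : ℤ), 2 * (n : ℤ) - 1), (-(n : ℤ), 2 * (n : ℤ) - 1),
                 (0, 4 * (n : ℤ) - 2), (0, 0)]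
         d := !![0, 0, 0, 0, 0;
                 Polynomial.X ^ n, 0, 0, 0, 0;
                 0, 0, 0, 0, 0;
                 0, 0, Polynomial.X ^ n, 0, 0;
                 0, 0, 0, 0, 0] }
  iota := !![1, 0, 0, 0, 0;
             0, 0, 1, 0, 0;
             0, 1, 0, 0, 0;
             0, 0, 0, 1, 0;
             1, 0, 0, 0, 1]

/-- The dual complex `C* = Hom_{F₂[U]}(C, F₂[U])`: dual basis, negated
gradings, transposed differential. -/
def dualCx (C : CxData) : CxData where
  idx := C.idx
  gr := fun i => -C.gr i
  d := C.dᵀ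

/-- The dual pair `(C*, ι*)`. -/
def dualHor (X : Hor) : Hor where
  C := dualCx X.C
  iota := X.iotaᵀ

/-- `n`-fold tensor power (`0` gives the trivial complex `C_O`). -/
def tensorPow (X : Hor) : ℕ → Hor
  | 0 => CO
  | n + 1 => tensorHor (tensorPow X n) X

/-- The trace map `tr : C ⊗ C* → F₂[U]`. -/
def trMap (C : CxData) : Matrix Unit (C.idx × C.idx) PolyU :=
  fun _ p => if p.1 = p.2 then 1 else 0

/-- The cotrace map `cotr : F₂[U] → C ⊗ C*`. -/
def cotrMap (C : CxData) : Matrix (C.idx × C.idx) Unit PolyU :=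
  fun p _ => if p.1 = p.2 then 1 else 0

/-!
Both iterated involutions are expanded using `Φ_{C⊗D} = Φ_C ⊗ 1 + 1 ⊗ Φ_D`. Over `F₂` all terms
cancel in pairs except `Φ²ι ⊗ ιΦ ⊗ ιΦ` and `Φι ⊗ Φι ⊗ ιΦ²`. Applying the first and second Hasse
derivatives to `∂² = 0` shows that `Φ` commutes with `∂` and that `Φ² = ∂Ψ + Ψ∂` with
`Ψ = D⁽²⁾∂`, so both leftover terms are null-homotopic (the involutions are chain maps). The
reassociation of basis elements is then a grading-preserving isomorphism of complexes that
intertwines the involutions up to this homotopy, so its permutation matrix and that of its inverse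
are almost `ι_K`-local maps.
-/

namespace Matrix

variable {R : Type*}

theorem map_hasseDeriv_mul [CommSemiring R] {l m n : Type*} [Fintype m] (k : ℕ)
    (M : Matrix l m R[X]) (N : Matrix m n R[X]) :
    (M * N).map (hasseDeriv k) =
      ∑ ij ∈ Finset.HasAntidiagonal.antidiagonal k,
        M.map (hasseDeriv ij.1) * N.map (hasseDeriv ij.2) := by
  refine Matrix.ext fun i j => ?_
  simp only [map_apply, mul_apply, map_sum, hasseDeriv_mul, sum_apply]
  exact Finset.sum_comm

theorem map_derivative_mul [CommSemiring R] {l m n : Type*} [Fintype m]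
    (M : Matrix l m R[X]) (N : Matrix m n R[X]) :
    (M * N).map derivative = M * N.map derivative + M.map derivative * N := by
  rw [← hasseDeriv_one, map_hasseDeriv_mul]
  simp [Finset.Nat.sum_antidiagonal_succ, hasseDeriv_zero]

theorem map_hasseDeriv_two_mul [CommSemiring R] {l m n : Type*} [Fintype m]
    (M : Matrix l m R[X]) (N : Matrix m n R[X]) :
    (M * N).map (hasseDeriv 2) =
      M * N.map (hasseDeriv 2) + M.map derivative * N.map derivative
        + M.map (hasseDeriv 2) * N := by
  rw [map_hasseDeriv_mul]
  simp [Finset.Nat.sum_antidiagonal_succ, hasseDeriv_zero, hasseDeriv_one, add_assoc]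

def kroneckerSum [Semiring R] {A B : Type*} [DecidableEq A] [DecidableEq B]
    (M : Matrix A A R) (N : Matrix B B R) : Matrix (A × B) (A × B) R :=
  M ⊗ₖ (1 : Matrix B B R) + (1 : Matrix A A R) ⊗ₖ N

theorem kroneckerSum_assoc [CommSemiring R] {A B G : Type*} [DecidableEq A] [DecidableEq B]
    [DecidableEq G] (M : Matrix A A R) (N : Matrix B B R) (P : Matrix G G R) :
    (kroneckerSum (kroneckerSum M N) P).submatrix (Equiv.prodAssoc A B G).symm
        (Equiv.prodAssoc A B G).symm
      = kroneckerSum M (kroneckerSum N P) := by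
  simp only [kroneckerSum, ← one_kronecker_one, add_kronecker, kronecker_add, submatrix_add,
    Pi.add_apply, kronecker_assoc', add_assoc]

end Matrix

theorem Equiv.toPEquiv_toMatrix_mul {R m n : Type*} [Semiring R] [Fintype m] [Fintype n]
    [DecidableEq m] [DecidableEq n] (e : m ≃ n) (M : Matrix n n R) :
    (e.toPEquiv.toMatrix : Matrix m n R) * M
      = M.submatrix e e * (e.toPEquiv.toMatrix : Matrix m n R) := by
  rw [PEquiv.toMatrix_toPEquiv_mul, PEquiv.mul_toMatrix_toPEquiv, submatrix_submatrix]
  simp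

theorem Equiv.toPEquiv_toMatrix_mul_symm {R m n : Type*} [Semiring R] [Fintype n]
    [DecidableEq m] [DecidableEq n] (e : m ≃ n) :
    (e.toPEquiv.toMatrix : Matrix m n R) * (e.symm.toPEquiv.toMatrix : Matrix n m R) = 1 := by
  rw [← PEquiv.toMatrix_trans, ← Equiv.toPEquiv_trans, e.self_trans_symm, Equiv.toPEquiv_refl,
    PEquiv.toMatrix_refl]

theorem hatM_eq_map {m n : Type} (f : Matrix m n PolyU) : hatM f = f.map constantCoeff := rfl

theorem hatM_mul {l m n : Type} [Fintype m] (f : Matrix l m PolyU) (g : Matrix m n PolyU) :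
    hatM (f * g) = hatM f * hatM g := by
  simp only [hatM_eq_map, Matrix.map_mul]

theorem hatM_add {m n : Type} (f g : Matrix m n PolyU) : hatM (f + g) = hatM f + hatM g :=
  Matrix.map_add _ (map_add constantCoeff) f g

theorem hatM_one {n : Type} [DecidableEq n] : hatM (1 : Matrix n n PolyU) = 1 :=
  Matrix.map_one _ (map_zero constantCoeff) (map_one constantCoeff)

theorem hatM_kronecker {l m n p : Type} (A : Matrix l m PolyU) (B : Matrix n p PolyU) :
    hatM (A ⊗ₖ B) = hatM A ⊗ₖ hatM B := by
  simp only [hatM_eq_map, kroneckerMap_map, map_mul]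
  rfl

theorem hatM_kroneckerSum {A B : Type} [DecidableEq A] [DecidableEq B] (M : Matrix A A PolyU)
    (N : Matrix B B PolyU) : hatM (kroneckerSum M N) = kroneckerSum (hatM M) (hatM N) := by
  rw [kroneckerSum, kroneckerSum, hatM_add, hatM_kronecker, hatM_kronecker, hatM_one, hatM_one]

namespace CxData

variable {C : CxData}

theorem phi_eq_map (C : CxData) : C.Phi = C.d.map derivative := rfl

theorem commute_phi_d (hC : C.d * C.d = 0) : Commute C.Phi C.d := by
  have h := congrArg (Matrix.map · derivative) hC
  simp only [map_derivative_mul, Matrix.map_zero _ derivative_zero] at h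
  exact ((add_eq_zero_iff_eq_neg.mp h).trans (ZModModule.neg_eq_self _)).symm

theorem commute_phiHat_dHat (hC : C.d * C.d = 0) : Commute C.PhiHat C.dHat :=
  (commute_phi_d hC).map constantCoeff.mapMatrix

-- Over `F₂` the second derivative is `2 • D⁽²⁾ = 0`, so the Hasse derivative `D⁽²⁾` is needed.
theorem phi_mul_self (hC : C.d * C.d = 0) :
    C.Phi * C.Phi = C.d * C.d.map (hasseDeriv 2) + C.d.map (hasseDeriv 2) * C.d := by
  have h := congrArg (Matrix.map · (hasseDeriv 2)) hC
  simp only [map_hasseDeriv_two_mul, Matrix.map_zero _ (map_zero _)] at h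
  rw [phi_eq_map, ← sub_eq_zero, ZModModule.sub_eq_add, ← h]
  abel

theorem hatHomotopic_phiHat_mul_self (hC : C.d * C.d = 0) :
    HatHomotopic C C (C.PhiHat * C.PhiHat) 0 := by
  refine ⟨hatM (C.d.map (hasseDeriv 2)), ?_⟩
  rw [add_zero, PhiHat, dHat, ← hatM_mul, phi_mul_self hC, hatM_add, hatM_mul, hatM_mul]

end CxData

open CxData

theorem phi_tensorCx (C D : CxData) : (tensorCx C D).Phi = kroneckerSum C.Phi D.Phi := by
  ext ⟨i, j⟩ ⟨k, l⟩
  simp only [tensorCx, Phi, kroneckerSum, Matrix.add_apply, kroneckerMap_apply, Matrix.one_apply,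
    derivative_add]
  split_ifs <;> simp

theorem dHat_tensorCx (C D : CxData) : (tensorCx C D).dHat = kroneckerSum C.dHat D.dHat :=
  hatM_kroneckerSum C.d D.d

theorem phiHat_tensorCx (C D : CxData) :
    (tensorCx C D).PhiHat = kroneckerSum C.PhiHat D.PhiHat :=
  (congrArg hatM (phi_tensorCx C D)).trans (hatM_kroneckerSum C.Phi D.Phi)

theorem commute_dHat_tensorCx {C D : CxData} {f : Matrix C.idx C.idx F2}
    {g : Matrix D.idx D.idx F2} (hf : Commute f C.dHat) (hg : Commute g D.dHat) :
    Commute (f ⊗ₖ g) (tensorCx C D).dHat := by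
  rw [dHat_tensorCx]
  simp only [Commute, SemiconjBy, kroneckerSum, Matrix.mul_add, Matrix.add_mul,
    ← mul_kronecker_mul, Matrix.one_mul, Matrix.mul_one, hf.eq, hg.eq]

section KroneckerF2

variable {A B G : Type} [Fintype A] [Fintype B] [Fintype G] [DecidableEq A] [DecidableEq B]
  [DecidableEq G]

theorem kronecker_homotopy_left {dA H : Matrix A A F2} {dB g : Matrix B B F2}
    (hg : Commute g dB) :
    (dA * H + H * dA) ⊗ₖ g
      = kroneckerSum dA dB * (H ⊗ₖ g) + (H ⊗ₖ g) * kroneckerSum dA dB := by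
  simp only [kroneckerSum, Matrix.mul_add, Matrix.add_mul, ← mul_kronecker_mul, Matrix.one_mul,
    Matrix.mul_one, hg.eq, add_kronecker]
  rw [add_add_add_comm, ZModModule.add_self, add_zero]

theorem kronecker_homotopy_right {dA g : Matrix A A F2} {dB H : Matrix B B F2}
    (hg : Commute g dA) :
    g ⊗ₖ (dB * H + H * dB)
      = kroneckerSum dA dB * (g ⊗ₖ H) + (g ⊗ₖ H) * kroneckerSum dA dB := by
  simp only [kroneckerSum, Matrix.mul_add, Matrix.add_mul, ← mul_kronecker_mul, Matrix.one_mul,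
    Matrix.mul_one, hg.eq, kronecker_add]
  rw [add_add_add_comm, ZModModule.add_self, zero_add]

def iotaTensor (iA pA : Matrix A A F2) (iB pB : Matrix B B F2) : Matrix (A × B) (A × B) F2 :=
  iA ⊗ₖ iB + (pA * iA) ⊗ₖ (iB * pB)

theorem iotaTensor_assoc (iA pA : Matrix A A F2) (iB pB : Matrix B B F2)
    (iC pC : Matrix G G F2) :
    iotaTensor iA pA (iotaTensor iB pB iC pC) (kroneckerSum pB pC)
      = (iotaTensor (iotaTensor iA pA iB pB) (kroneckerSum pA pB) iC pC).submatrix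
          (Equiv.prodAssoc A B G).symm (Equiv.prodAssoc A B G).symm
        + ((pA * pA * iA) ⊗ₖ ((iB * pB) ⊗ₖ (iC * pC))
          + (pA * iA) ⊗ₖ ((pB * iB) ⊗ₖ (iC * (pC * pC)))) := by
  simp only [iotaTensor, kroneckerSum, add_kronecker, kronecker_add, submatrix_add, Pi.add_apply,
    kronecker_assoc', Matrix.add_mul, Matrix.mul_add, ← mul_kronecker_mul, Matrix.one_mul,
    Matrix.mul_one, Matrix.mul_assoc]
  abel_nf
  rw [two_zsmul, ZModModule.add_self, add_zero]

end KroneckerF2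

theorem hatHomotopic_iff_add {C D : CxData} {f g : Matrix D.idx C.idx F2} :
    HatHomotopic C D f g ↔ HatHomotopic C D (f + g) 0 := by
  rw [HatHomotopic, HatHomotopic, add_zero]

namespace HatHomotopic

variable {C D : CxData}

theorem add {f g : Matrix D.idx C.idx F2} (hf : HatHomotopic C D f 0)
    (hg : HatHomotopic C D g 0) : HatHomotopic C D (f + g) 0 := by
  obtain ⟨H, hH⟩ := hf
  obtain ⟨K, hK⟩ := hg
  refine ⟨H + K, ?_⟩
  rw [add_zero] at hH hK ⊢
  rw [hH, hK, Matrix.mul_add, Matrix.add_mul]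
  abel

theorem of_eq_add {f g t : Matrix D.idx C.idx F2} (h : f = g + t) (ht : HatHomotopic C D t 0) :
    HatHomotopic C D f g := by
  rwa [hatHomotopic_iff_add, h, add_right_comm, ZModModule.add_self, zero_add]

theorem mul_right {f g : Matrix C.idx C.idx F2} (hf : HatHomotopic C C f 0)
    (hg : Commute g C.dHat) : HatHomotopic C C (f * g) 0 := by
  obtain ⟨H, hH⟩ := hf
  refine ⟨H * g, ?_⟩
  rw [add_zero] at hH ⊢
  rw [hH, add_mul, Matrix.mul_assoc, Matrix.mul_assoc, Matrix.mul_assoc, hg.eq]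

theorem mul_left {f g : Matrix C.idx C.idx F2} (hf : HatHomotopic C C f 0)
    (hg : Commute g C.dHat) : HatHomotopic C C (g * f) 0 := by
  obtain ⟨H, hH⟩ := hf
  refine ⟨g * H, ?_⟩
  rw [add_zero] at hH ⊢
  simp only [hH, Matrix.mul_add, ← Matrix.mul_assoc, hg.eq]

theorem kronecker_left {f : Matrix C.idx C.idx F2} {g : Matrix D.idx D.idx F2}
    (hf : HatHomotopic C C f 0) (hg : Commute g D.dHat) :
    HatHomotopic (tensorCx C D) (tensorCx C D) (f ⊗ₖ g) 0 := by
  obtain ⟨H, hH⟩ := hf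
  rw [add_zero] at hH
  refine ⟨H ⊗ₖ g, ?_⟩
  rw [dHat_tensorCx, hH]
  exact (add_zero _).trans (kronecker_homotopy_left hg)

theorem kronecker_right {f : Matrix D.idx D.idx F2} {g : Matrix C.idx C.idx F2}
    (hf : HatHomotopic D D f 0) (hg : Commute g C.dHat) :
    HatHomotopic (tensorCx C D) (tensorCx C D) (g ⊗ₖ f) 0 := by
  obtain ⟨H, hH⟩ := hf
  rw [add_zero] at hH
  refine ⟨g ⊗ₖ H, ?_⟩
  rw [dHat_tensorCx, hH]
  exact (add_zero _).trans (kronecker_homotopy_right hg)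

end HatHomotopic

theorem hatHomotopic_iota_tensorHor_assoc {X Y Z : Hor} (hX : X.C.d * X.C.d = 0)
    (hY : Y.C.d * Y.C.d = 0) (hZ : Z.C.d * Z.C.d = 0) (hιX : Commute X.iota X.C.dHat)
    (hιY : Commute Y.iota Y.C.dHat) (hιZ : Commute Z.iota Z.C.dHat) :
    HatHomotopic (tensorCx X.C (tensorCx Y.C Z.C)) (tensorCx X.C (tensorCx Y.C Z.C))
      (tensorHor X (tensorHor Y Z)).iota
      ((tensorHor (tensorHor X Y) Z).iota.submatrix
        (Equiv.prodAssoc X.C.idx Y.C.idx Z.C.idx).symm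
        (Equiv.prodAssoc X.C.idx Y.C.idx Z.C.idx).symm) := by
  have key := iotaTensor_assoc X.iota X.C.PhiHat Y.iota Y.C.PhiHat Z.iota Z.C.PhiHat
  rw [← phiHat_tensorCx, ← phiHat_tensorCx] at key
  -- `key` is now `ι_{X⊗(Y⊗Z)} = ι_{(X⊗Y)⊗Z} + …` with `tensorHor` unfolded.
  refine .of_eq_add key (.add ?_ ?_)
  · exact ((hatHomotopic_phiHat_mul_self hX).mul_right hιX).kronecker_left
      (commute_dHat_tensorCx (hιY.mul_left (commute_phiHat_dHat hY))
        (hιZ.mul_left (commute_phiHat_dHat hZ)))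
  · exact (((hatHomotopic_phiHat_mul_self hZ).mul_left hιZ).kronecker_right
      ((commute_phiHat_dHat hY).mul_left hιY)).kronecker_right
      ((commute_phiHat_dHat hX).mul_left hιX)

structure IsReindexing (X Y : Hor) (e : X.C.idx ≃ Y.C.idx) : Prop where
  gr_apply : ∀ i, Y.C.gr (e i) = X.C.gr i
  d_submatrix : Y.C.d.submatrix e e = X.C.d
  hatHomotopic_iota : HatHomotopic X.C X.C X.iota (Y.iota.submatrix e e)

namespace IsReindexing

variable {X Y : Hor} {e : X.C.idx ≃ Y.C.idx}

theorem symm (h : IsReindexing X Y e) : IsReindexing Y X e.symm := by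
  have hd : X.C.d.submatrix e.symm e.symm = Y.C.d := by
    rw [← h.d_submatrix, submatrix_submatrix]
    simp
  refine ⟨fun j => by simpa using (h.gr_apply (e.symm j)).symm, hd, ?_⟩
  obtain ⟨K, hK⟩ := h.hatHomotopic_iota
  refine ⟨K.submatrix e.symm e.symm, ?_⟩
  have hdHat : X.C.dHat.submatrix e.symm e.symm = Y.C.dHat := congrArg hatM hd
  have hK' := congrArg (Matrix.submatrix · e.symm e.symm) hK
  simp only [submatrix_add, Pi.add_apply, submatrix_submatrix, Equiv.self_comp_symm,
    submatrix_id_id] at hK'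
  rwa [add_comm, ← hdHat, submatrix_mul_equiv, submatrix_mul_equiv]

theorem le (h : IsReindexing X Y e) : Le Y X := by
  have hdL : X.C.dL.submatrix e.symm e.symm = Y.C.dL :=
    congrArg (Matrix.map · toL) h.symm.d_submatrix
  have hdHat : Y.C.dHat.submatrix e e = X.C.dHat := congrArg hatM h.d_submatrix
  have hinv : (e.symm.toPEquiv.toMatrix : Matrix Y.C.idx X.C.idx Laur)
      * (e.toPEquiv.toMatrix : Matrix X.C.idx Y.C.idx Laur) = 1 := by
    simpa using e.symm.toPEquiv_toMatrix_mul_symm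
  refine ⟨e.toPEquiv.toMatrix, ?graded, ?chain,
    ⟨e.symm.toPEquiv.toMatrix, ?chain_inv, ⟨0, ?left_inv⟩, ⟨0, ?right_inv⟩⟩, ?iota⟩
  case graded =>
    intro i j k hk
    simp only [PEquiv.toMatrix_apply, Equiv.toPEquiv_apply, Option.mem_def,
      Option.some.injEq] at hk
    split_ifs at hk with hij
    · obtain rfl : k = 0 := by simpa [Polynomial.coeff_one, eq_comm] using hk
      simp [← hij, h.gr_apply]
    · exact absurd (Polynomial.coeff_zero k) hk
  case chain => rw [e.toPEquiv_toMatrix_mul, h.d_submatrix]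
  case chain_inv => rw [e.symm.toPEquiv_toMatrix_mul, hdL]
  case left_inv =>
    rw [PEquiv.map_toMatrix, hinv, Matrix.mul_zero, Matrix.zero_mul, add_zero]
    exact ZModModule.add_self 1
  case right_inv =>
    rw [PEquiv.map_toMatrix, e.toPEquiv_toMatrix_mul_symm, Matrix.mul_zero, Matrix.zero_mul,
      add_zero]
    exact ZModModule.add_self 1
  case iota =>
    obtain ⟨K, hK⟩ := h.hatHomotopic_iota
    refine ⟨K * (e.toPEquiv.toMatrix : Matrix X.C.idx Y.C.idx F2), ?_⟩
    rw [hatM_eq_map, PEquiv.map_toMatrix, e.toPEquiv_toMatrix_mul, ← Matrix.add_mul, hK,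
      Matrix.add_mul, Matrix.mul_assoc, Matrix.mul_assoc, ← hdHat, ← e.toPEquiv_toMatrix_mul,
      Matrix.mul_assoc]

theorem almostLocalEquiv (h : IsReindexing X Y e) : AlmostLocalEquiv X Y :=
  ⟨h.symm.le, h.le⟩

end IsReindexing

theorem isReindexing_tensorHor_assoc {X Y Z : Hor} (hX : X.C.d * X.C.d = 0)
    (hY : Y.C.d * Y.C.d = 0) (hZ : Z.C.d * Z.C.d = 0) (hιX : Commute X.iota X.C.dHat)
    (hιY : Commute Y.iota Y.C.dHat) (hιZ : Commute Z.iota Z.C.dHat) :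
    IsReindexing (tensorHor X (tensorHor Y Z)) (tensorHor (tensorHor X Y) Z)
      (Equiv.prodAssoc X.C.idx Y.C.idx Z.C.idx).symm where
  gr_apply _ := add_assoc _ _ _
  d_submatrix := kroneckerSum_assoc X.C.d Y.C.d Z.C.d
  hatHomotopic_iota := hatHomotopic_iota_tensorHor_assoc hX hY hZ hιX hιY hιZ

/-- For horizontal almost `ι_K`-complexes `A, B, C`, the two
involutions `ι_{A⊗(B⊗C)}` and `ι_{(A⊗B)⊗C}` on the `U = 0` truncation of
`A ⊗ B ⊗ C` (obtained by iterating the tensor construction in the two possible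
ways, the latter transported along the canonical reassociation of basis
elements) are chain homotopic; hence the tensor operation on almost
`ι_K`-local equivalence classes is associative. -/
theorem tensor_assoc (X Y Z : Hor)
    (hX : IsHorizontal X) (hY : IsHorizontal Y) (hZ : IsHorizontal Z) :
    HatHomotopic (tensorCx X.C (tensorCx Y.C Z.C)) (tensorCx X.C (tensorCx Y.C Z.C))
      (tensorHor X (tensorHor Y Z)).iota
      ((tensorHor (tensorHor X Y) Z).iota.submatrix
        (Equiv.prodAssoc X.C.idx Y.C.idx Z.C.idx).symm
        (Equiv.prodAssoc X.C.idx Y.C.idx Z.C.idx).symm) ∧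
    AlmostLocalEquiv (tensorHor X (tensorHor Y Z)) (tensorHor (tensorHor X Y) Z) := by
  have h := isReindexing_tensorHor_assoc hX.1.1 hY.1.1 hZ.1.1 hX.2.2.1.1 hY.2.2.1.1 hZ.2.2.1.1
  exact ⟨h.hatHomotopic_iota, h.almostLocalEquiv⟩
end
end

section
/- Let (C, ι) be a horizontal almost ι_K-complex and equip its dual C* with the dual involution ι*. Then the trace map tr : C ⊗_{F₂[U]} C* → F₂[U] and the cotrace map cotr : F₂[U] → C ⊗_{F₂[U]} C* are almost ι_K-local maps between (C,ι)⊗(C*,ι*) and the trivial complex C_O; consequently (C,ι)⊗(C*,ι*) is almost ι_K-locally equivalent to C_O, so the class of the dual is the inverse of the class of (C,ι). -/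
/-!
Algebraic model for horizontal almost `ι_K`-complexes (Kang–Park,
"Torsion in the knot concordance group and cabling").

Conventions.  We work over `F₂ = ℤ/2`.  A bigraded chain complex of finitely
generated free `F₂[U]`-modules is presented by a finite homogeneous basis
`idx`, a bidegree function `gr : idx → ℤ × ℤ` (Alexander and Maslov gradings),
and a differential matrix `d` over `F₂[U]` (the `j`-th basis vector is sent to
`∑ i, d i j • eᵢ`; matrix multiplication is composition).  The variable `U`
has bidegree `(−1, −2)` and the differential has bidegree `(0, −1)`.
-/

open Polynomial Matrix Kronecker

noncomputable section

/-!
Read `C ⊗ C*` as square matrices through `Matrix.vec`. Its differential becomes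
`X ↦ dᵀX + Xdᵀ`, `tr` and `cotr` both become the identity matrix, and the involution
`ι ⊗ ι* + Φι ⊗ ι*Φ*` takes the identity to `ι² + ΦιΦι` (transposed for `cotr`). So the relation
`ι² ≃ 1 + ΦιΦι` makes `tr` and `cotr` commute with the involutions up to homotopy.

After inverting `U`, `C` is homotopy equivalent to `F₂[U, U⁻¹]` through maps `f` and `g` with
`fg = 1` and `gf ≃ 1`. The cycles `(gf)ᵀ` and `gf` have trace one, so they give homotopy
inverses of `tr` and `cotr`. The remaining composites are homotopic to the rank-one map
`gf ⊗ (gf)ᵀ`. Tensoring the homotopy `gf ≃ 1` with itself shows that this map is homotopic to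
`1 ⊗ 1`.
-/

section ChainHomotopy

variable {R : Type*} [CommRing R] {l m n p : Type*}

theorem Matrix.add_self_eq_zero_of_charTwo [CharP R 2] (A : Matrix m n R) : A + A = 0 := by
  ext; exact CharTwo.add_self_eq_zero _

def tensorDiff [DecidableEq m] [DecidableEq n] (dC : Matrix m m R) (dD : Matrix n n R) :
    Matrix (m × n) (m × n) R :=
  dC ⊗ₖ 1 + 1 ⊗ₖ dD

theorem tensorDiff_map {S : Type*} [CommRing S] [DecidableEq m] [DecidableEq n] (φ : R →+* S)
    (dC : Matrix m m R) (dD : Matrix n n R) :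
    (tensorDiff dC dD).map φ = tensorDiff (dC.map φ) (dD.map φ) := by
  ext ⟨i, j⟩ ⟨k, l⟩
  simp [tensorDiff, Matrix.one_apply, apply_ite φ]

variable [Fintype l] [Fintype m] [Fintype n]

/-- Chain homotopy between maps of complexes with differentials `dC` and `dD`; it is meant for
rings of characteristic two, where `f + g = f - g` and no signs are needed. -/
def ChainHomotopic (dD : Matrix m m R) (dC : Matrix n n R) (f g : Matrix m n R) : Prop :=
  ∃ H : Matrix m n R, f + g = dD * H + H * dC

namespace ChainHomotopic

variable {dB : Matrix l l R} {dC : Matrix n n R} {dD : Matrix m m R} {dE : Matrix p p R}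

theorem symm {f g : Matrix m n R} (h : ChainHomotopic dD dC f g) : ChainHomotopic dD dC g f := by
  obtain ⟨H, hH⟩ := h
  exact ⟨H, by rw [add_comm, hH]⟩

theorem transpose {f g : Matrix m n R} (h : ChainHomotopic dD dC f g) :
    ChainHomotopic dCᵀ dDᵀ fᵀ gᵀ := by
  obtain ⟨H, hH⟩ := h
  exact ⟨Hᵀ, by rw [← Matrix.transpose_add, hH, Matrix.transpose_add, Matrix.transpose_mul,
    Matrix.transpose_mul, add_comm]⟩

theorem mul_left [Fintype p] {f g : Matrix m n R} (h : ChainHomotopic dD dC f g) (k : Matrix p m R)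
    (hk : k * dD = dE * k) : ChainHomotopic dE dC (k * f) (k * g) := by
  obtain ⟨H, hH⟩ := h
  exact ⟨k * H, by rw [← Matrix.mul_add, hH, Matrix.mul_add, ← Matrix.mul_assoc, hk,
    Matrix.mul_assoc, Matrix.mul_assoc]⟩

theorem mul_right {f g : Matrix m n R} (h : ChainHomotopic dD dC f g) (k : Matrix n l R)
    (hk : dC * k = k * dB) : ChainHomotopic dD dB (f * k) (g * k) := by
  obtain ⟨H, hH⟩ := h
  exact ⟨H * k, by rw [← Matrix.add_mul, hH, Matrix.add_mul, Matrix.mul_assoc H dC, hk,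
    ← Matrix.mul_assoc H k, Matrix.mul_assoc dD]⟩

variable [CharP R 2]

theorem refl (f : Matrix m n R) : ChainHomotopic dD dC f f :=
  ⟨0, by rw [Matrix.add_self_eq_zero_of_charTwo, Matrix.mul_zero, Matrix.zero_mul, add_zero]⟩

theorem of_eq {f g : Matrix m n R} (h : f = g) : ChainHomotopic dD dC f g := h ▸ refl f

theorem trans {f g k : Matrix m n R} (hfg : ChainHomotopic dD dC f g)
    (hgk : ChainHomotopic dD dC g k) : ChainHomotopic dD dC f k := by
  obtain ⟨H, hH⟩ := hfg
  obtain ⟨K, hK⟩ := hgk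
  refine ⟨H + K, ?_⟩
  calc f + k = (f + g) + (g + k) := by
        rw [← add_assoc, add_assoc f, Matrix.add_self_eq_zero_of_charTwo, add_zero]
    _ = dD * (H + K) + (H + K) * dC := by rw [hH, hK, Matrix.mul_add, Matrix.add_mul]; abel

variable [Fintype p] [DecidableEq l] [DecidableEq m] [DecidableEq n] [DecidableEq p]

theorem kronecker_left {f g : Matrix m n R} (h : ChainHomotopic dD dC f g) (k : Matrix p l R)
    (hk : k * dB = dE * k) :
    ChainHomotopic (tensorDiff dD dE) (tensorDiff dC dB) (f ⊗ₖ k) (g ⊗ₖ k) := by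
  obtain ⟨H, hH⟩ := h
  refine ⟨H ⊗ₖ k, ?_⟩
  have hk0 : H ⊗ₖ (dE * k) + H ⊗ₖ (k * dB) = 0 := by
    rw [hk, Matrix.add_self_eq_zero_of_charTwo]
  simp only [tensorDiff, Matrix.add_mul, Matrix.mul_add, ← Matrix.mul_kronecker_mul,
    Matrix.one_mul, Matrix.mul_one, ← Matrix.add_kronecker, hH]
  rw [Matrix.add_kronecker, add_add_add_comm, hk0, add_zero]

theorem kronecker_right {f g : Matrix m n R} (h : ChainHomotopic dD dC f g) (k : Matrix p l R)
    (hk : k * dB = dE * k) :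
    ChainHomotopic (tensorDiff dE dD) (tensorDiff dB dC) (k ⊗ₖ f) (k ⊗ₖ g) := by
  obtain ⟨H, hH⟩ := h
  refine ⟨k ⊗ₖ H, ?_⟩
  have hk0 : (dE * k) ⊗ₖ H + (k * dB) ⊗ₖ H = 0 := by
    rw [hk, Matrix.add_self_eq_zero_of_charTwo]
  simp only [tensorDiff, Matrix.add_mul, Matrix.mul_add, ← Matrix.mul_kronecker_mul,
    Matrix.one_mul, Matrix.mul_one, ← Matrix.kronecker_add, hH]
  rw [Matrix.kronecker_add, add_add_add_comm, hk0, zero_add]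

end ChainHomotopic

end ChainHomotopy

section Vectorization

variable {R S : Type*} [CommRing R] [CommRing S] {n : Type*}

/- An element of `C ⊗ C*`, or of its dual, is encoded as a matrix `X : Matrix n n R` through
`vec`. -/
def vecCol (X : Matrix n n R) : Matrix (n × n) Unit R := replicateCol Unit (vec X)

def vecRow (X : Matrix n n R) : Matrix Unit (n × n) R := replicateRow Unit (vec X)

theorem vecCol_add (X Y : Matrix n n R) : vecCol (X + Y) = vecCol X + vecCol Y := rfl

theorem vecRow_add (X Y : Matrix n n R) : vecRow (X + Y) = vecRow X + vecRow Y := rfl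

theorem vecCol_map (φ : R →+* S) (X : Matrix n n R) :
    (vecCol X).map φ = vecCol (X.map φ) := rfl

theorem vecRow_map (φ : R →+* S) (X : Matrix n n R) :
    (vecRow X).map φ = vecRow (X.map φ) := rfl

theorem vecCol_transpose_mul_vecRow (f : Matrix Unit n R) (g : Matrix n Unit R) :
    vecCol (g * f)ᵀ * vecRow (g * f) = (g * f) ⊗ₖ (g * f)ᵀ := by
  ext ⟨i, j⟩ ⟨k, l⟩
  simp only [vecCol, vecRow, Matrix.mul_apply, replicateCol_apply, replicateRow_apply, vec,
    kronecker_apply, Matrix.transpose_apply, Fintype.sum_unique]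
  ring

variable [Fintype n]

theorem kronecker_mul_vecCol (A B X : Matrix n n R) :
    (B ⊗ₖ A) * vecCol X = vecCol (A * X * Bᵀ) := by
  rw [vecCol, vecCol, ← replicateCol_mulVec, kronecker_mulVec_vec]

theorem vecRow_mul_kronecker (A B X : Matrix n n R) :
    vecRow X * (B ⊗ₖ A) = vecRow (Aᵀ * X * B) := by
  rw [vecRow, vecRow, ← replicateRow_vecMul, vec_vecMul_kronecker]

theorem vecRow_mul_vecCol (X Y : Matrix n n R) :
    vecRow X * vecCol Y = of fun _ _ => trace (Xᵀ * Y) := by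
  rw [vecRow, vecCol, replicateRow_mul_replicateCol, vec_dotProduct_vec]

variable [DecidableEq n]

theorem tensorDiff_mul_vecCol (d X : Matrix n n R) :
    tensorDiff d dᵀ * vecCol X = vecCol (dᵀ * X + X * dᵀ) := by
  rw [tensorDiff, Matrix.add_mul, kronecker_mul_vecCol, kronecker_mul_vecCol, ← vecCol_add]
  simp only [Matrix.transpose_one, Matrix.mul_one, Matrix.one_mul, add_comm]

theorem vecRow_mul_tensorDiff (d X : Matrix n n R) :
    vecRow X * tensorDiff d dᵀ = vecRow (d * X + X * d) := by
  rw [tensorDiff, Matrix.mul_add, vecRow_mul_kronecker, vecRow_mul_kronecker, ← vecRow_add]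
  simp only [Matrix.transpose_one, Matrix.transpose_transpose, Matrix.mul_one, Matrix.one_mul,
    add_comm]

theorem vecRow_one_mul_tensorDiff [CharP R 2] (d : Matrix n n R) :
    vecRow (1 : Matrix n n R) * tensorDiff d dᵀ = 0 := by
  rw [vecRow_mul_tensorDiff, Matrix.mul_one, Matrix.one_mul,
    Matrix.add_self_eq_zero_of_charTwo]
  rfl

theorem tensorDiff_mul_vecCol_one [CharP R 2] (d : Matrix n n R) :
    tensorDiff d dᵀ * vecCol (1 : Matrix n n R) = 0 := by
  rw [tensorDiff_mul_vecCol, Matrix.mul_one, Matrix.one_mul,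
    Matrix.add_self_eq_zero_of_charTwo]
  rfl

theorem ChainHomotopic.congr_vecRow {d X Y : Matrix n n R} (h : ChainHomotopic d d X Y) :
    ChainHomotopic 0 (tensorDiff d dᵀ) (vecRow X) (vecRow Y) := by
  obtain ⟨H, hH⟩ := h
  exact ⟨vecRow H, by rw [Matrix.zero_mul, zero_add, vecRow_mul_tensorDiff, ← hH, vecRow_add]⟩

theorem ChainHomotopic.congr_vecCol {d X Y : Matrix n n R} (h : ChainHomotopic dᵀ dᵀ X Y) :
    ChainHomotopic (tensorDiff d dᵀ) 0 (vecCol X) (vecCol Y) := by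
  obtain ⟨H, hH⟩ := h
  exact ⟨vecCol H, by rw [Matrix.mul_zero, add_zero, tensorDiff_mul_vecCol, ← hH, vecCol_add]⟩

/-- `ι ⊗ ι* + Φι ⊗ ι*Φ*`, the involution of `(C, ι) ⊗ (C*, ι*)`. -/
def tensorInvolution (ι Φ : Matrix n n R) : Matrix (n × n) (n × n) R :=
  ι ⊗ₖ ιᵀ + (Φ * ι) ⊗ₖ (ιᵀ * Φᵀ)

theorem vecRow_one_mul_tensorInvolution (ι Φ : Matrix n n R) :
    vecRow (1 : Matrix n n R) * tensorInvolution ι Φ = vecRow (ι * ι + Φ * ι * Φ * ι) := by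
  rw [tensorInvolution, Matrix.mul_add, vecRow_mul_kronecker, vecRow_mul_kronecker,
    ← vecRow_add]
  simp only [Matrix.transpose_transpose, Matrix.transpose_mul, Matrix.mul_one, Matrix.mul_assoc]

theorem tensorInvolution_mul_vecCol_one (ι Φ : Matrix n n R) :
    tensorInvolution ι Φ * vecCol (1 : Matrix n n R)
      = vecCol (ι * ι + Φ * ι * Φ * ι)ᵀ := by
  rw [tensorInvolution, Matrix.add_mul, kronecker_mul_vecCol, kronecker_mul_vecCol,
    ← vecCol_add]
  simp only [Matrix.transpose_add, Matrix.transpose_mul, Matrix.mul_one, Matrix.mul_assoc]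

variable {d ι Φ : Matrix n n R}

theorem ChainHomotopic.vecRow_one_comm_tensorInvolution
    (h : ChainHomotopic d d 1 (ι * ι + Φ * ι * Φ * ι)) :
    ChainHomotopic 0 (tensorDiff d dᵀ)
      ((1 : Matrix Unit Unit R) * vecRow (1 : Matrix n n R))
      (vecRow (1 : Matrix n n R) * tensorInvolution ι Φ) := by
  rw [Matrix.one_mul, vecRow_one_mul_tensorInvolution]
  exact h.congr_vecRow

theorem ChainHomotopic.tensorInvolution_comm_vecCol_one
    (h : ChainHomotopic d d 1 (ι * ι + Φ * ι * Φ * ι)) :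
    ChainHomotopic (tensorDiff d dᵀ) 0 (tensorInvolution ι Φ * vecCol (1 : Matrix n n R))
      (vecCol (1 : Matrix n n R) * (1 : Matrix Unit Unit R)) := by
  rw [Matrix.mul_one, tensorInvolution_mul_vecCol_one]
  refine ChainHomotopic.congr_vecCol ?_
  simpa only [Matrix.transpose_one] using h.symm.transpose

end Vectorization

section Retraction

variable {R : Type*} [CommRing R] {n : Type*} [Fintype n] [DecidableEq n]
  {d : Matrix n n R} {f : Matrix Unit n R} {g : Matrix n Unit R}

theorem tensorDiff_mul_vecCol_transpose_eq_zero (hf : f * d = 0) (hg : d * g = 0) :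
    tensorDiff d dᵀ * vecCol (g * f)ᵀ = 0 := by
  rw [tensorDiff_mul_vecCol, ← Matrix.transpose_mul, ← Matrix.transpose_mul, Matrix.mul_assoc,
    hf, ← Matrix.mul_assoc, hg]
  simp [vecCol]

theorem vecRow_mul_tensorDiff_eq_zero (hf : f * d = 0) (hg : d * g = 0) :
    vecRow (g * f) * tensorDiff d dᵀ = 0 := by
  rw [vecRow_mul_tensorDiff, Matrix.mul_assoc, hf, ← Matrix.mul_assoc, hg]
  simp [vecRow]

theorem vecRow_one_mul_vecCol_transpose (hfg : f * g = 1) :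
    vecRow (1 : Matrix n n R) * vecCol (g * f)ᵀ = 1 := by
  ext
  simp [vecRow_mul_vecCol, hfg]

theorem vecRow_mul_vecCol_one (hfg : f * g = 1) :
    vecRow (g * f) * vecCol (1 : Matrix n n R) = 1 := by
  ext
  simp [vecRow_mul_vecCol, hfg]

variable [CharP R 2]

theorem chainHomotopic_kronecker_transpose_one (hf : f * d = 0) (hg : d * g = 0)
    (hgf : ChainHomotopic d d 1 (g * f)) :
    ChainHomotopic (tensorDiff d dᵀ) (tensorDiff d dᵀ) ((g * f) ⊗ₖ (g * f)ᵀ) 1 := by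
  have hchain : (g * f) * d = d * (g * f) := by
    rw [Matrix.mul_assoc, hf, ← Matrix.mul_assoc, hg, Matrix.mul_zero, Matrix.zero_mul]
  have hgfT : ChainHomotopic dᵀ dᵀ (g * f)ᵀ 1 := by
    simpa only [Matrix.transpose_one] using hgf.transpose.symm
  refine ((hgfT.kronecker_right (g * f) hchain).trans (hgf.symm.kronecker_left 1 ?_)).trans ?_
  · rw [Matrix.one_mul, Matrix.mul_one]
  · exact .of_eq one_kronecker_one

theorem chainHomotopic_vecCol_transpose_mul_vecRow_one (hf : f * d = 0) (hg : d * g = 0)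
    (hgf : ChainHomotopic d d 1 (g * f)) :
    ChainHomotopic (tensorDiff d dᵀ) (tensorDiff d dᵀ)
      (vecCol (g * f)ᵀ * vecRow (1 : Matrix n n R)) 1 := by
  have hchain :
      vecCol (g * f)ᵀ * (0 : Matrix Unit Unit R) = tensorDiff d dᵀ * vecCol (g * f)ᵀ := by
    rw [Matrix.mul_zero, tensorDiff_mul_vecCol_transpose_eq_zero hf hg]
  refine (hgf.congr_vecRow.mul_left _ hchain).trans ?_
  rw [vecCol_transpose_mul_vecRow]
  exact chainHomotopic_kronecker_transpose_one hf hg hgf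

theorem chainHomotopic_vecCol_one_mul_vecRow (hf : f * d = 0) (hg : d * g = 0)
    (hgf : ChainHomotopic d d 1 (g * f)) :
    ChainHomotopic (tensorDiff d dᵀ) (tensorDiff d dᵀ)
      (vecCol (1 : Matrix n n R) * vecRow (g * f)) 1 := by
  have hchain :
      (0 : Matrix Unit Unit R) * vecRow (g * f) = vecRow (g * f) * tensorDiff d dᵀ := by
    rw [Matrix.zero_mul, vecRow_mul_tensorDiff_eq_zero hf hg]
  have hgfT : ChainHomotopic dᵀ dᵀ 1 (g * f)ᵀ := by
    simpa only [Matrix.transpose_one] using hgf.transpose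
  refine (hgfT.congr_vecCol.mul_right _ hchain).trans ?_
  rw [vecCol_transpose_mul_vecRow]
  exact chainHomotopic_kronecker_transpose_one hf hg hgf

end Retraction

instance : CharP Laur 2 := charP_of_injective_ringHom Polynomial.toLaurent_injective 2

theorem hatHomotopic_iff {C D : CxData} {f g : Matrix D.idx C.idx F2} :
    HatHomotopic C D f g ↔ ChainHomotopic D.dHat C.dHat f g := Iff.rfl

theorem lHomotopic_iff {C D : CxData} {f g : Matrix D.idx C.idx Laur} :
    LHomotopic C D f g ↔ ChainHomotopic D.dL C.dL f g := Iff.rfl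

theorem CO_dL : CO.C.dL = 0 :=
  Matrix.map_zero _ (map_zero toL)

theorem CO_dHat : CO.C.dHat = 0 :=
  Matrix.map_zero _ (map_zero (Polynomial.constantCoeff (R := F2)))

theorem CO_iota : CO.iota = 1 := rfl

theorem Hor.dL_tensorHor_dualHor (X : Hor) :
    (tensorHor X (dualHor X)).C.dL = tensorDiff X.C.dL X.C.dLᵀ :=
  tensorDiff_map toL X.C.d X.C.dᵀ

theorem Hor.dHat_tensorHor_dualHor (X : Hor) :
    (tensorHor X (dualHor X)).C.dHat = tensorDiff X.C.dHat X.C.dHatᵀ :=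
  tensorDiff_map (Polynomial.constantCoeff (R := F2)) X.C.d X.C.dᵀ

theorem Hor.iota_tensorHor_dualHor (X : Hor) :
    (tensorHor X (dualHor X)).iota = tensorInvolution X.iota X.C.PhiHat := rfl

theorem trMap_eq_vecRow (C : CxData) : trMap C = vecRow 1 := by
  ext _ ⟨i, j⟩
  simp [trMap, vecRow, Matrix.one_apply, eq_comm]

theorem cotrMap_eq_vecCol (C : CxData) : cotrMap C = vecCol 1 := by
  ext ⟨i, j⟩ _
  simp [cotrMap, vecCol, Matrix.one_apply, eq_comm]

/- The index types are those of `AlmostLocalMap (tensorHor X (dualHor X)) CO`, so that these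
lemmas rewrite inside it. -/
theorem trMap_map {S : Type*} [CommRing S] (φ : PolyU →+* S) (X : Hor) :
    Matrix.map (m := CO.C.idx) (n := (tensorHor X (dualHor X)).C.idx) (trMap X.C) φ
      = vecRow 1 := by
  rw [trMap_eq_vecRow]
  exact congrArg vecRow (Matrix.map_one _ (map_zero φ) (map_one φ))

theorem cotrMap_map {S : Type*} [CommRing S] (φ : PolyU →+* S) (X : Hor) :
    Matrix.map (m := (tensorHor X (dualHor X)).C.idx) (n := CO.C.idx) (cotrMap X.C) φ
      = vecCol 1 := by
  rw [cotrMap_eq_vecCol]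
  exact congrArg vecCol (Matrix.map_one _ (map_zero φ) (map_one φ))

theorem hatM_trMap (X : Hor) :
    hatM (m := CO.C.idx) (n := (tensorHor X (dualHor X)).C.idx) (trMap X.C) = vecRow 1 :=
  trMap_map (Polynomial.constantCoeff (R := F2)) X

theorem hatM_cotrMap (X : Hor) :
    hatM (m := (tensorHor X (dualHor X)).C.idx) (n := CO.C.idx) (cotrMap X.C) = vecCol 1 :=
  cotrMap_map (Polynomial.constantCoeff (R := F2)) X

theorem gradedMap_trMap (C : CxData) :
    GradedMap (tensorCx C (dualCx C)) CO.C (0, 0) (trMap C) := by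
  rintro _ ⟨i, j⟩ k hk
  by_cases hij : i = j
  · subst hij
    obtain rfl : k = 0 := by simpa [trMap, Polynomial.coeff_one, eq_comm] using hk
    simp [CO, tensorCx, dualCx]
  · simp [trMap, hij] at hk

theorem gradedMap_cotrMap (C : CxData) :
    GradedMap CO.C (tensorCx C (dualCx C)) (0, 0) (cotrMap C) := by
  rintro ⟨i, j⟩ _ k hk
  by_cases hij : i = j
  · subst hij
    obtain rfl : k = 0 := by simpa [cotrMap, Polynomial.coeff_one, eq_comm] using hk
    simp [CO, tensorCx, dualCx]
  · simp [cotrMap, hij] at hk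

theorem localizedHomotopyEquiv_trMap {X : Hor} (hX : LocalizationTrivial X.C) :
    LocalizedHomotopyEquiv (tensorHor X (dualHor X)).C CO.C (trMap X.C) := by
  obtain ⟨f, g, hf, hg, hfg, hgf⟩ := hX
  refine ⟨vecCol (g * f)ᵀ, ?_, ?_, ?_⟩
  · rw [CO_dL, Hor.dL_tensorHor_dualHor]
    exact (Matrix.mul_zero _).trans (tensorDiff_mul_vecCol_transpose_eq_zero hf hg).symm
  · rw [lHomotopic_iff, Hor.dL_tensorHor_dualHor, trMap_map]
    exact chainHomotopic_vecCol_transpose_mul_vecRow_one hf hg hgf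
  · rw [trMap_map]
    exact ChainHomotopic.of_eq (vecRow_one_mul_vecCol_transpose hfg)

theorem localizedHomotopyEquiv_cotrMap {X : Hor} (hX : LocalizationTrivial X.C) :
    LocalizedHomotopyEquiv CO.C (tensorHor X (dualHor X)).C (cotrMap X.C) := by
  obtain ⟨f, g, hf, hg, hfg, hgf⟩ := hX
  refine ⟨vecRow (g * f), ?_, ?_, ?_⟩
  · rw [CO_dL, Hor.dL_tensorHor_dualHor]
    exact (vecRow_mul_tensorDiff_eq_zero hf hg).trans (Matrix.zero_mul _).symm
  · rw [cotrMap_map]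
    exact ChainHomotopic.of_eq (vecRow_mul_vecCol_one hfg)
  · rw [lHomotopic_iff, Hor.dL_tensorHor_dualHor, cotrMap_map]
    exact chainHomotopic_vecCol_one_mul_vecRow hf hg hgf

theorem chainHomotopic_one_iota_mul_iota_add {X : Hor}
    (hsq : HatHomotopic X.C X.C (X.iota * X.iota)
      (1 + X.C.PhiHat * X.iota * X.C.PhiHat * X.iota)) :
    ChainHomotopic X.C.dHat X.C.dHat 1
      (X.iota * X.iota + X.C.PhiHat * X.iota * X.C.PhiHat * X.iota) := by
  obtain ⟨Q, hQ⟩ := hsq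
  exact ⟨Q, by rw [← hQ, add_left_comm]⟩

theorem almostLocalMap_trMap {X : Hor} (hloc : LocalizationTrivial X.C)
    (hsq : HatHomotopic X.C X.C (X.iota * X.iota)
      (1 + X.C.PhiHat * X.iota * X.C.PhiHat * X.iota)) :
    AlmostLocalMap (tensorHor X (dualHor X)) CO (trMap X.C) := by
  refine ⟨gradedMap_trMap X.C, ?_, localizedHomotopyEquiv_trMap hloc, ?_⟩
  · rw [trMap_eq_vecRow]
    exact (vecRow_one_mul_tensorDiff X.C.d).trans (Matrix.zero_mul _).symm
  · rw [hatHomotopic_iff, Hor.dHat_tensorHor_dualHor, CO_dHat, CO_iota, hatM_trMap,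
      Hor.iota_tensorHor_dualHor]
    exact (chainHomotopic_one_iota_mul_iota_add hsq).vecRow_one_comm_tensorInvolution

theorem almostLocalMap_cotrMap {X : Hor} (hloc : LocalizationTrivial X.C)
    (hsq : HatHomotopic X.C X.C (X.iota * X.iota)
      (1 + X.C.PhiHat * X.iota * X.C.PhiHat * X.iota)) :
    AlmostLocalMap CO (tensorHor X (dualHor X)) (cotrMap X.C) := by
  refine ⟨gradedMap_cotrMap X.C, ?_, localizedHomotopyEquiv_cotrMap hloc, ?_⟩
  · rw [cotrMap_eq_vecCol]
    exact (Matrix.mul_zero _).trans (tensorDiff_mul_vecCol_one X.C.d).symm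
  · rw [hatHomotopic_iff, Hor.dHat_tensorHor_dualHor, CO_dHat, CO_iota, hatM_cotrMap,
      Hor.iota_tensorHor_dualHor]
    exact (chainHomotopic_one_iota_mul_iota_add hsq).tensorInvolution_comm_vecCol_one

/-- For a horizontal almost `ι_K`-complex `(C, ι)` with dual
`(C*, ι*)`, the trace map `tr : C ⊗ C* → F₂[U]` and the cotrace map
`cotr : F₂[U] → C ⊗ C*` are almost `ι_K`-local maps between `(C,ι) ⊗ (C*,ι*)`
and the trivial complex `C_O`; consequently `(C,ι) ⊗ (C*,ι*)` is almost
`ι_K`-locally equivalent to `C_O`, so the class of the dual is the inverse of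
the class of `(C, ι)`. -/
theorem trace_cotrace_local (X : Hor) (hX : IsHorizontal X) :
    AlmostLocalMap (tensorHor X (dualHor X)) CO (trMap X.C) ∧
    AlmostLocalMap CO (tensorHor X (dualHor X)) (cotrMap X.C) ∧
    AlmostLocalEquiv (tensorHor X (dualHor X)) CO := by
  obtain ⟨-, hloc, -, -, -, hsq, -⟩ := hX
  have htr := almostLocalMap_trMap hloc hsq
  have hcotr := almostLocalMap_cotrMap hloc hsq
  exact ⟨htr, hcotr, ⟨_, htr⟩, ⟨_, hcotr⟩⟩

end
end
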